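/- For ℓ > 0 and 0 < ε ≤ ε_max(ℓ), where sinh(ε_max(ℓ)) = tanh(1)·tanh(½·arsinh(1/sinh ℓ))/cosh(ℓ/2), the real number a defined by tanh a = tanh ε · cosh(ℓ/2) satisfies a < ½·arsinh(1/sinh ℓ). -/
import Mathlib

open Real

private lemma tanh_lt_tanh_aux {x y : ℝ} (h : x < y) : Real.tanh x < Real.tanh y := by
  rw [Real.tanh_eq_sinh_div_cosh, Real.tanh_eq_sinh_div_cosh,
    div_lt_div_iff₀ (Real.cosh_pos x) (Real.cosh_pos y)]
  have : Real.sinh (x - y) < 0 := by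
    rw [← Real.sinh_zero]; exact Real.sinh_lt_sinh.2 (by linarith)
  rw [Real.sinh_sub] at this; linarith

private lemma tanh_lt_one_aux (x : ℝ) : Real.tanh x < 1 := by
  rw [Real.tanh_eq_sinh_div_cosh, div_lt_one (Real.cosh_pos x)]
  exact Real.sinh_lt_cosh x

private lemma tanh_pos_aux {x : ℝ} (h : 0 < x) : 0 < Real.tanh x := by
  rw [Real.tanh_eq_sinh_div_cosh]
  exact div_pos (Real.sinh_pos_iff.2 h) (Real.cosh_pos x)

private lemma tanh_lt_sinh_aux {x : ℝ} (h : 0 < x) : Real.tanh x < Real.sinh x := by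
  rw [Real.tanh_eq_sinh_div_cosh, div_lt_iff₀ (Real.cosh_pos x)]
  have h1 : 1 < Real.cosh x := Real.one_lt_cosh.2 h.ne'
  have h2 : 0 < Real.sinh x := Real.sinh_pos_iff.2 h
  nlinarith

/-- The maximal strip width `ε_max`. -/
noncomputable def epsMax (ℓ : ℝ) : ℝ :=
  Real.arsinh (Real.tanh 1 * Real.tanh (Real.arsinh (1 / Real.sinh ℓ) / 2) / Real.cosh (ℓ / 2))

theorem strip_inside_half_collar (ℓ ε a : ℝ) (hℓ : 0 < ℓ) (hε₀ : 0 < ε)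
    (hε₁ : ε ≤ epsMax ℓ)
    (ha : Real.tanh a = Real.tanh ε * Real.cosh (ℓ / 2)) :
    a < Real.arsinh (1 / Real.sinh ℓ) / 2 := by
  set w : ℝ := Real.arsinh (1 / Real.sinh ℓ) with hw
  have hwpos : 0 < w := Real.arsinh_pos_iff.2 (by positivity)
  have hsinh_le : Real.sinh ε ≤ Real.tanh 1 * Real.tanh (w / 2) / Real.cosh (ℓ / 2) := by
    have := Real.sinh_le_sinh.2 hε₁
    rwa [epsMax, Real.sinh_arsinh] at this
  have hcosh : 0 < Real.cosh (ℓ / 2) := Real.cosh_pos _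
  have h1 : Real.tanh a < Real.tanh 1 * Real.tanh (w / 2) := by
    calc Real.tanh a = Real.tanh ε * Real.cosh (ℓ / 2) := ha
      _ < Real.sinh ε * Real.cosh (ℓ / 2) := by
          exact mul_lt_mul_of_pos_right (tanh_lt_sinh_aux hε₀) hcosh
      _ ≤ (Real.tanh 1 * Real.tanh (w / 2) / Real.cosh (ℓ / 2)) * Real.cosh (ℓ / 2) :=
          mul_le_mul_of_nonneg_right hsinh_le hcosh.le
      _ = Real.tanh 1 * Real.tanh (w / 2) := by field_simp
  have h2 : Real.tanh 1 * Real.tanh (w / 2) < Real.tanh (w / 2) := by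
    have := tanh_pos_aux (by linarith : (0:ℝ) < w / 2)
    nlinarith [tanh_lt_one_aux 1, tanh_pos_aux one_pos]
  by_contra hcon
  push_neg at hcon
  rcases eq_or_lt_of_le hcon with h | h
  · rw [← h] at h1; linarith
  · exact absurd (tanh_lt_tanh_aux h) (by linarith)
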